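/- arXiv:2005.11667 — 2 statements merged into one kernel-verified Lean document; each statement's English description precedes it below -/
import Mathlib

section
/- If v ∈ ℝ^N is orthogonal to the group-consensus subspace (i.e., ⟪v, x⟫ = 0 for every x ∈ X_or, with the Euclidean inner product), then ⟪v, B.mulVec u⟫ = 0 for every u ∈ ℝ^M. In other words, the component B_⊥ of B along any basis of the orthogonal complement of X_or is the zero matrix. -/
open Matrix

/-- The `N × N` permutation matrix of a permutation `σ` of `Fin N`, with the convention
`(permMat N σ).mulVec x i = x (σ⁻¹ i)`. -/
def permMat (N : ℕ) (σ : Equiv.Perm (Fin N)) : Matrix (Fin N) (Fin N) ℝ :=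
  Matrix.of fun i j => if σ j = i then (1 : ℝ) else 0

/-- The group-consensus subspace: vectors that are constant on each orbit of the natural
action of the subgroup `G` of permutations of `Fin N`. -/
def consensusSet (N : ℕ) (G : Subgroup (Equiv.Perm (Fin N))) : Set (Fin N → ℝ) :=
  {x | ∀ i j : Fin N, (∃ σ ∈ G, σ i = j) → x i = x j}

lemma permMat_mul_apply (N M : ℕ) (σ : Equiv.Perm (Fin N)) (B : Matrix (Fin N) (Fin M) ℝ)
    (i : Fin N) (k : Fin M) : (permMat N σ * B) i k = B (σ⁻¹ i) k := by
  simp only [Matrix.mul_apply, permMat, Matrix.of_apply]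
  rw [Finset.sum_eq_single (σ⁻¹ i)]
  · simp
  · intro j _ hj
    rw [if_neg, zero_mul]
    intro h; exact hj (by simp [← h])
  · simp

/-- If `v` is orthogonal to the group-consensus subspace, then `⟪v, B.mulVec u⟫ = 0` for every
input `u`: the component `B_⊥` of `B` along the orthogonal complement of `X_or` vanishes. -/
theorem B_perp_is_zero (N M : ℕ) (A : Matrix (Fin N) (Fin N) ℝ)
    (B : Matrix (Fin N) (Fin M) ℝ) (G : Subgroup (Equiv.Perm (Fin N)))
    (hA : ∀ σ ∈ G, permMat N σ * A = A * permMat N σ)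
    (hB : ∀ σ ∈ G, permMat N σ * B = B)
    (v : Fin N → ℝ) (hv : ∀ x ∈ consensusSet N G, ∑ i, v i * x i = 0) :
    ∀ u : Fin M → ℝ, ∑ i, v i * B.mulVec u i = 0 := by
  intro u
  apply hv
  intro i j ⟨σ, hσ, hσij⟩
  have hrow : ∀ k, B i k = B j k := by
    intro k
    have := congrFun (congrFun (hB σ hσ) j) k
    rw [permMat_mul_apply] at this
    rwa [show σ⁻¹ j = i from by simp [← hσij]] at this
  simp [Matrix.mulVec, dotProduct]
  exact Finset.sum_congr rfl fun k _ => by rw [hrow k]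
end

section
/- Let E be the N×K indicator matrix of the orbit partition, with pseudoinverse E† := (Eᵀ * E)⁻¹ * Eᵀ, and define the quotient pair A_∥ := E† * A * E and B_∥ := E† * B. Suppose u : ℝ → ℝ^M is continuous, x : ℝ → ℝ^N satisfies, for every t ∈ ℝ, that x has derivative A.mulVec (x t) + B.mulVec (u t) at t, and x 0 ∈ X_or. Then the reduced state z : ℝ → ℝ^K defined by z t := E†.mulVec (x t) satisfies, for every t ∈ ℝ, that z has derivative A_∥.mulVec (z t) + B_∥.mulVec (u t) at t; i.e., the quotient network state obeys the quotient dynamics ż = A_∥ z + B_∥ u. -/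
/-!
Every `σ ∈ G` maps solutions of `ẋ = A x + B u` to solutions, because `P_σ` commutes with
`A` and fixes `B`; since it also fixes `x 0`, uniqueness of solutions gives `P_σ x t = x t`.
So the trajectory never leaves `X_or`, which is the range of `E`, and on that range `E E†` is
the identity. Differentiating `z = E† x` then gives `ż = E† A x + E† B u = E† A E z + E† B u`.
-/

open Matrix

theorem linear_ODE_solution_unique {F : Type*} [NormedAddCommGroup F] [NormedSpace ℝ F]
    (L : F →L[ℝ] F) (f : ℝ → F) {x y : ℝ → F}
    (hx : ∀ t, HasDerivAt x (L (x t) + f t) t) (hy : ∀ t, HasDerivAt y (L (y t) + f t) t)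
    {t₀ : ℝ} (h : x t₀ = y t₀) : x = y := by
  have hlip : ∀ t, LipschitzWith ‖L‖₊ fun z => L z + f t := fun t => by
    simpa using L.lipschitz.add (LipschitzWith.const (f t))
  exact ODE_solution_unique_univ (s := fun _ => Set.univ) (fun t => (hlip t).lipschitzOnWith)
    (fun t => ⟨hx t, trivial⟩) (fun t => ⟨hy t, trivial⟩) h

theorem HasDerivAt.matrix_mulVec {m n : Type*} [Fintype m] [Fintype n] (Q : Matrix m n ℝ)
    {x : ℝ → n → ℝ} {d : n → ℝ} {t : ℝ} (h : HasDerivAt x d t) :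
    HasDerivAt (fun s => Q *ᵥ x s) (Q *ᵥ d) t :=
  (Q.mulVecLin.toContinuousLinearMap.hasFDerivAt).comp_hasDerivAt t h

theorem mulVec_eq_self_of_commute {n m : Type*} [Fintype n] [Fintype m]
    {A Q : Matrix n n ℝ} {B : Matrix n m ℝ} {u : ℝ → m → ℝ} {x : ℝ → n → ℝ}
    (hx : ∀ t, HasDerivAt x (A *ᵥ x t + B *ᵥ u t) t)
    (hQA : Q * A = A * Q) (hQB : Q * B = B) {t₀ : ℝ} (h₀ : Q *ᵥ x t₀ = x t₀) (t : ℝ) :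
    Q *ᵥ x t = x t := by
  have hQx : ∀ t, HasDerivAt (fun s => Q *ᵥ x s) (A *ᵥ (Q *ᵥ x t) + B *ᵥ u t) t := by
    intro t
    convert (hx t).matrix_mulVec Q using 1
    rw [mulVec_add, mulVec_mulVec, mulVec_mulVec, mulVec_mulVec, hQA, hQB]
  exact congrFun (linear_ODE_solution_unique A.mulVecLin.toContinuousLinearMap
    (fun t => B *ᵥ u t) hQx hx h₀) t

section IndicatorMatrix

variable {ι κ : Type*} [DecidableEq κ] {c : ι → κ}

theorem mulVec_eq_comp_of_indicator [Fintype κ] {R : Type*} [NonAssocSemiring R]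
    {E : Matrix ι κ R} (hE : ∀ i k, E i k = if c i = k then 1 else 0) (w : κ → R) :
    E *ᵥ w = w ∘ c := by
  ext i
  simp [mulVec, dotProduct, hE]

theorem transpose_mul_self_of_indicator [Fintype ι] {R : Type*} [NonAssocSemiring R]
    {E : Matrix ι κ R} (hE : ∀ i k, E i k = if c i = k then 1 else 0) :
    Eᵀ * E = diagonal fun k => ((Finset.univ.filter fun i => c i = k).card : R) := by
  ext k l
  rcases eq_or_ne k l with rfl | hkl
  · simp [mul_apply, hE, ← ite_and]
  · rw [diagonal_apply_ne _ hkl, mul_apply]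
    refine Finset.sum_eq_zero fun i _ => ?_
    rw [transpose_apply, hE, hE]
    split_ifs with hk hl <;> simp_all

theorem isUnit_det_transpose_mul_self_of_indicator [Fintype ι] [Fintype κ] {R : Type*} [Field R]
    [CharZero R] {E : Matrix ι κ R} (hE : ∀ i k, E i k = if c i = k then 1 else 0)
    (hsurj : Function.Surjective c) : IsUnit (Eᵀ * E).det := by
  rw [← isUnit_iff_isUnit_det, transpose_mul_self_of_indicator hE, isUnit_diagonal,
    Pi.isUnit_iff]
  intro k
  obtain ⟨i, rfl⟩ := hsurj k
  exact (Nat.cast_ne_zero.mpr (Finset.card_ne_zero.mpr ⟨i, by simp⟩)).isUnit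

end IndicatorMatrix

theorem pinv_mulVec_mulVec {R m n : Type*} [CommRing R] [Fintype m] [Fintype n] [DecidableEq n]
    {E : Matrix m n R} (hE : IsUnit (Eᵀ * E).det) (w : n → R) :
    ((Eᵀ * E)⁻¹ * Eᵀ) *ᵥ (E *ᵥ w) = w := by
  rw [mulVec_mulVec, Matrix.mul_assoc, nonsing_inv_mul _ hE, one_mulVec]

theorem permMat_mulVec (N : ℕ) (σ : Equiv.Perm (Fin N)) (x : Fin N → ℝ) :
    permMat N σ *ᵥ x = fun i => x (σ⁻¹ i) := by
  ext i
  simp [permMat, mulVec, dotProduct, ← Equiv.eq_symm_apply]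

theorem mem_consensusSet_iff_forall_permMat_mulVec {N : ℕ} {G : Subgroup (Equiv.Perm (Fin N))}
    {x : Fin N → ℝ} : x ∈ consensusSet N G ↔ ∀ σ ∈ G, permMat N σ *ᵥ x = x := by
  simp only [consensusSet, Set.mem_ofPred_eq, permMat_mulVec, funext_iff]
  constructor
  · rintro hx σ hσ i
    exact (hx i _ ⟨σ⁻¹, inv_mem hσ, rfl⟩).symm
  · rintro hx i _ ⟨σ, hσ, rfl⟩
    simpa using hx σ hσ (σ i)

theorem exists_mulVec_eq_of_mem_consensusSet {N K : ℕ} {G : Subgroup (Equiv.Perm (Fin N))}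
    {c : Fin N → Fin K} (hc : ∀ i j, c i = c j → ∃ σ ∈ G, σ i = j)
    (hsurj : Function.Surjective c) {E : Matrix (Fin N) (Fin K) ℝ}
    (hE : ∀ i k, E i k = if c i = k then 1 else 0) {x : Fin N → ℝ}
    (hx : x ∈ consensusSet N G) : ∃ w, E *ᵥ w = x := by
  refine ⟨x ∘ Function.surjInv hsurj, ?_⟩
  ext i
  rw [mulVec_eq_comp_of_indicator hE]
  exact hx _ _ (hc _ _ (Function.surjInv_eq hsurj _))

theorem quotient_dynamics_general (N M K : ℕ) (A : Matrix (Fin N) (Fin N) ℝ)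
    (B : Matrix (Fin N) (Fin M) ℝ) (G : Subgroup (Equiv.Perm (Fin N)))
    (hA : ∀ σ ∈ G, permMat N σ * A = A * permMat N σ)
    (hB : ∀ σ ∈ G, permMat N σ * B = B)
    (c : Fin N → Fin K)
    (hc : ∀ i j : Fin N, (∃ σ ∈ G, σ i = j) ↔ c i = c j)
    (hsurj : Function.Surjective c)
    (E : Matrix (Fin N) (Fin K) ℝ)
    (hE : ∀ (i : Fin N) (k : Fin K), E i k = if c i = k then 1 else 0)
    (u : ℝ → Fin M → ℝ)
    (x : ℝ → Fin N → ℝ)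
    (hx : ∀ t : ℝ, HasDerivAt x (A.mulVec (x t) + B.mulVec (u t)) t)
    (hx0 : x 0 ∈ consensusSet N G) :
    ∀ t : ℝ, HasDerivAt (fun s => ((Eᵀ * E)⁻¹ * Eᵀ).mulVec (x s))
      ((((Eᵀ * E)⁻¹ * Eᵀ) * A * E).mulVec (((Eᵀ * E)⁻¹ * Eᵀ).mulVec (x t)) +
        (((Eᵀ * E)⁻¹ * Eᵀ) * B).mulVec (u t)) t := by
  intro t
  set P := (Eᵀ * E)⁻¹ * Eᵀ
  have hxt : x t ∈ consensusSet N G :=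
    mem_consensusSet_iff_forall_permMat_mulVec.2 fun σ hσ =>
      mulVec_eq_self_of_commute hx (hA σ hσ) (hB σ hσ)
        (mem_consensusSet_iff_forall_permMat_mulVec.1 hx0 σ hσ) t
  obtain ⟨w, hw⟩ :=
    exists_mulVec_eq_of_mem_consensusSet (fun i j => (hc i j).2) hsurj hE hxt
  have hfix : E *ᵥ (P *ᵥ x t) = x t := by
    rw [← hw, pinv_mulVec_mulVec (isUnit_det_transpose_mul_self_of_indicator hE hsurj)]
  convert (hx t).matrix_mulVec P using 1
  rw [← mulVec_mulVec _ (P * A) E, hfix, mulVec_add, mulVec_mulVec, mulVec_mulVec]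

/-- With `E` the indicator matrix of the orbit partition, pseudoinverse `E† = (Eᵀ * E)⁻¹ * Eᵀ`,
and quotient pair `A_∥ = E† * A * E`, `B_∥ = E† * B`: if `u` is continuous, `x` solves
`ẋ = Ax + Bu`, and `x 0 ∈ X_or`, then the reduced state `z t = E†.mulVec (x t)` solves the
quotient dynamics `ż = A_∥ z + B_∥ u`. -/
theorem quotient_dynamics (N M K : ℕ) (A : Matrix (Fin N) (Fin N) ℝ)
    (B : Matrix (Fin N) (Fin M) ℝ) (G : Subgroup (Equiv.Perm (Fin N)))
    (hA : ∀ σ ∈ G, permMat N σ * A = A * permMat N σ)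
    (hB : ∀ σ ∈ G, permMat N σ * B = B)
    (c : Fin N → Fin K)
    (hc : ∀ i j : Fin N, (∃ σ ∈ G, σ i = j) ↔ c i = c j)
    (hsurj : Function.Surjective c)
    (E : Matrix (Fin N) (Fin K) ℝ)
    (hE : ∀ (i : Fin N) (k : Fin K), E i k = if c i = k then 1 else 0)
    (u : ℝ → Fin M → ℝ) (hu : Continuous u)
    (x : ℝ → Fin N → ℝ)
    (hx : ∀ t : ℝ, HasDerivAt x (A.mulVec (x t) + B.mulVec (u t)) t)
    (hx0 : x 0 ∈ consensusSet N G) :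
    ∀ t : ℝ, HasDerivAt (fun s => ((Eᵀ * E)⁻¹ * Eᵀ).mulVec (x s))
      ((((Eᵀ * E)⁻¹ * Eᵀ) * A * E).mulVec (((Eᵀ * E)⁻¹ * Eᵀ).mulVec (x t)) +
        (((Eᵀ * E)⁻¹ * Eᵀ) * B).mulVec (u t)) t :=
  quotient_dynamics_general N M K A B G hA hB c hc hsurj E hE u x hx hx0
end
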